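/- Composite basic construction: for each n ≥ 0, the element f_n = λ^{−n(n+1)/2} (e_{n+1} e_n ⋯ e_1)(e_{n+2} e_{n+1} ⋯ e_2) ⋯ (e_{2n+1} e_{2n} ⋯ e_{n+1}) ∈ M_{2n+1} is an idempotent satisfying: M_{2n+1} = M_n f_n M_n; f_n x f_n = f_n F_n(x) = F_n(x) f_n for all x ∈ M_n; and F_{M_n}(f_n) = λ^{n+1} 1. Hence M_{2n+1}, with idempotent f_n and conditional expectation F_{M_n}, realizes the basic construction of the composite conditional expectation F_n : M_n → N. -/

import Mathlib

/-- The Pimsner–Popa idempotent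
`f_n = λ^{-n(n+1)/2} (e_{n+1} e_n ⋯ e_1)(e_{n+2} ⋯ e_2) ⋯ (e_{2n+1} ⋯ e_{n+1})`. -/
noncomputable def fIdem {k : Type*} [Field k] {R : Type*} [Ring R] [Algebra k R]
    (lam : k) (e : ℕ → R) (n : ℕ) : R :=
  (lam⁻¹ ^ (n * (n + 1) / 2)) •
    (((List.range (n + 1)).map fun j =>
      ((List.range (n + 1)).map fun i => e (n + 1 + j - i)).prod).prod)

/-- The composite conditional expectation
`F_n = E ∘ E_M ∘ ⋯ ∘ E_{M_{n-1}} : M_n → N`. -/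
noncomputable def Fcomp {k : Type*} [Field k] {R : Type*} [Ring R] [Algebra k R]
    (E : R →ₗ[k] R) (Ec : ℕ → R →ₗ[k] R) : ℕ → R →ₗ[k] R
  | 0 => E
  | n + 1 => Fcomp E Ec n ∘ₗ Ec n

/-- The composite conditional expectation
`F_{M_n} = E_{M_n} ∘ ⋯ ∘ E_{M_{2n}} : M_{2n+1} → M_n`. -/
noncomputable def Gcomp {k : Type*} [Field k] {R : Type*} [Ring R] [Algebra k R]
    (Ec : ℕ → R →ₗ[k] R) (n : ℕ) : R →ₗ[k] R :=
  (((List.range (n + 1)).map fun i => Ec (n + i)).foldr (· ∘ₗ ·) LinearMap.id)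

/-!
Write `P_n = fWord e n`, so that `f_n = λ^{-n(n+1)/2} P_n`. Since
`P_{n+1} = (e_{n+2} ⋯ e_{2n+2}) P_n (e_{2n+3} ⋯ e_{n+2})`, the Jones relation
`e x e = E(x) e` and the braid relation `e_{i+1} e_i e_{i+1} = λ e_{i+1}` give
`P_n x P_n = λ^{n(n+1)/2} F_n(x) P_n` by induction on `n`, hence idempotency and
`f_n x f_n = F_n(x) f_n`. Each conditional expectation in `F_{M_{n+1}}` strips a matching pair
`e_j ⋯ e_j` off the ends of `P_{n+1}`, which gives `F_{M_{n+1}}(P_{n+1}) = λ^{n+2} F_{M_n}(P_n)`.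

For `M_{2n+1} = M_n f_n M_n` we compute with products of `k`-submodules of `R`. Two basic
constructions give `M_{2n+3} ⊆ M_{2n+1} K_n M_{2n+1}` for the middle factor
`K_n = e_{2n+2} P_n e_{2n+3} e_{2n+2}` of `P_{n+1}`. Since `e_{2n+1}` is a multiple of the
product of the two outer factors of `P_{n+1}`, writing `1 ∈ M_{2n+1} = M_{2n} e_{2n+1} M_{2n}` and
absorbing with the case `n` puts `K_n` into `M_{2n+1} P_{n+1} M_{2n+1}`. Finally
`M_{2n+2} P_{n+1} ⊆ M_{n+1} P_{n+1}` and its mirror image are the case `n` for the tower shifted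
by one step, in which `P_n` is a factor of `P_{n+1}`.
-/

section Words

variable {M : Type*} [Monoid M]

theorem Submonoid.mem_centralizer_singleton_iff {x z : M} :
    z ∈ Submonoid.centralizer {x} ↔ Commute x z := by
  simp [Submonoid.mem_centralizer_iff, Commute, SemiconjBy, eq_comm]

def descWord (e : ℕ → M) (a : ℕ) : ℕ → M
  | 0 => 1
  | ℓ + 1 => e (a + ℓ) * descWord e a ℓ

def ascWord (e : ℕ → M) (a : ℕ) : ℕ → M
  | 0 => 1
  | ℓ + 1 => ascWord e a ℓ * e (a + ℓ)

def rowWord (e : ℕ → M) (n : ℕ) : ℕ → M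
  | 0 => 1
  | m + 1 => rowWord e n m * descWord e (m + 1) (n + 1)

/-- `(e_{n+1} ⋯ e_1)(e_{n+2} ⋯ e_2) ⋯ (e_{2n+1} ⋯ e_{n+1})`, the word in `fIdem`. -/
def fWord (e : ℕ → M) (n : ℕ) : M := rowWord e n (n + 1)

def midWord (e : ℕ → M) (n : ℕ) : M :=
  e (2 * n + 2) * fWord e n * (e (2 * n + 3) * e (2 * n + 2))

variable {e : ℕ → M}

theorem descWord_mem {S : Submonoid M} {a ℓ : ℕ}
    (h : ∀ i, a ≤ i → i < a + ℓ → e i ∈ S) :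
    descWord e a ℓ ∈ S := by
  induction ℓ with
  | zero => exact S.one_mem
  | succ ℓ ih =>
    exact S.mul_mem (h _ (by omega) (by omega)) (ih fun i h₁ _ => h i h₁ (by omega))

theorem ascWord_mem {S : Submonoid M} {a ℓ : ℕ}
    (h : ∀ i, a ≤ i → i < a + ℓ → e i ∈ S) :
    ascWord e a ℓ ∈ S := by
  induction ℓ with
  | zero => exact S.one_mem
  | succ ℓ ih =>
    exact S.mul_mem (ih fun i h₁ _ => h i h₁ (by omega)) (h _ (by omega) (by omega))

theorem rowWord_mem {S : Submonoid M} {n m : ℕ}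
    (h : ∀ i, 1 ≤ i → i ≤ m + n → e i ∈ S) :
    rowWord e n m ∈ S := by
  induction m with
  | zero => exact S.one_mem
  | succ m ih =>
    exact S.mul_mem (ih fun i h₁ _ => h i h₁ (by omega))
      (descWord_mem fun i _ _ => h i (by omega) (by omega))

theorem fWord_mem {S : Submonoid M} {n : ℕ}
    (h : ∀ i, 1 ≤ i → i ≤ 2 * n + 1 → e i ∈ S) :
    fWord e n ∈ S :=
  rowWord_mem fun i h₁ _ => h i h₁ (by omega)

theorem commute_descWord {x : M} {a ℓ : ℕ}
    (h : ∀ i, a ≤ i → i < a + ℓ → Commute x (e i)) :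
    Commute x (descWord e a ℓ) :=
  Submonoid.mem_centralizer_singleton_iff.1 <|
    descWord_mem fun i h₁ h₂ => Submonoid.mem_centralizer_singleton_iff.2 (h i h₁ h₂)

theorem commute_ascWord {x : M} {a ℓ : ℕ}
    (h : ∀ i, a ≤ i → i < a + ℓ → Commute x (e i)) :
    Commute x (ascWord e a ℓ) :=
  Submonoid.mem_centralizer_singleton_iff.1 <|
    ascWord_mem fun i h₁ h₂ => Submonoid.mem_centralizer_singleton_iff.2 (h i h₁ h₂)

theorem commute_rowWord {x : M} {n m : ℕ}
    (h : ∀ i, 1 ≤ i → i ≤ m + n → Commute x (e i)) :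
    Commute x (rowWord e n m) :=
  Submonoid.mem_centralizer_singleton_iff.1 <|
    rowWord_mem fun i h₁ h₂ => Submonoid.mem_centralizer_singleton_iff.2 (h i h₁ h₂)

theorem commute_fWord {x : M} {n : ℕ}
    (h : ∀ i, 1 ≤ i → i ≤ 2 * n + 1 → Commute x (e i)) :
    Commute x (fWord e n) :=
  commute_rowWord fun i h₁ _ => h i h₁ (by omega)

theorem descWord_one (a : ℕ) : descWord e a 1 = e a := by
  simp [descWord]

theorem descWord_succ' (a ℓ : ℕ) : descWord e a (ℓ + 1) = descWord e (a + 1) ℓ * e a := by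
  induction ℓ with
  | zero => simp [descWord]
  | succ ℓ ih => rw [descWord, ih, ← mul_assoc, descWord, Nat.add_right_comm a 1]; rfl

theorem ascWord_succ' (a ℓ : ℕ) : ascWord e a (ℓ + 1) = e a * ascWord e (a + 1) ℓ := by
  induction ℓ with
  | zero => simp [ascWord]
  | succ ℓ ih => rw [ascWord, ih, mul_assoc, ascWord, Nat.add_right_comm a 1]; rfl

theorem descWord_shift (a ℓ : ℕ) :
    descWord (fun i => e (i + 1)) a ℓ = descWord e (a + 1) ℓ := by
  induction ℓ with
  | zero => rfl
  | succ ℓ ih => rw [descWord, descWord, ih, Nat.add_right_comm]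

theorem fWord_zero : fWord e 0 = e 1 := by
  simp [fWord, rowWord, descWord_one]

theorem midWord_zero : midWord e 0 = fWord e 1 := by
  simp [midWord, fWord, rowWord, descWord, mul_assoc]

theorem fWord_succ
    (hcomm : ∀ i j, 1 ≤ i → i + 2 ≤ j → Commute (e i) (e j)) (n : ℕ) :
    fWord e (n + 1) = ascWord e (n + 2) (n + 1) * fWord e n * descWord e (n + 2) (n + 2) := by
  suffices h : ∀ m, rowWord e (n + 1) m = ascWord e (n + 2) m * rowWord e n m by
    rw [fWord, rowWord, h]; rfl
  intro m
  induction m with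
  | zero => simp [rowWord, ascWord]
  | succ m ih =>
    have hc : Commute (e (n + 2 + m)) (rowWord e n m) :=
      commute_rowWord fun i h₁ _ => (hcomm i _ h₁ (by omega)).symm
    rw [rowWord, ih, rowWord, descWord, ascWord, show m + 1 + (n + 1) = n + 2 + m by omega]
    simp only [mul_assoc]
    rw [← mul_assoc (rowWord e n m), ← hc.eq, mul_assoc]

theorem fWord_succ_eq_shift_mul
    (hcomm : ∀ i j, 1 ≤ i → i + 2 ≤ j → Commute (e i) (e j)) (n : ℕ) :
    fWord e (n + 1) =
      fWord (fun i => e (i + 1)) n * (descWord e (n + 3) (n + 1) * ascWord e 1 (n + 2)) := by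
  suffices h : ∀ m, rowWord e (n + 1) m = rowWord (fun i => e (i + 1)) n m * ascWord e 1 m by
    rw [fWord, h, rowWord, descWord_shift, fWord, mul_assoc]
  intro m
  induction m with
  | zero => simp [rowWord, ascWord]
  | succ m ih =>
    have hc : Commute (ascWord e 1 m) (descWord e (m + 2) (n + 1)) :=
      commute_descWord fun j h₁ _ =>
        (commute_ascWord fun i h₁' _ => (hcomm i j h₁' (by omega)).symm).symm
    rw [rowWord, ih, descWord_succ', rowWord, descWord_shift, ascWord,
      show 1 + m = m + 1 by omega]
    simp only [← mul_assoc]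
    rw [mul_assoc _ (ascWord e 1 m), hc.eq, ← mul_assoc]

theorem fWord_succ_eq_mul_shift
    (hcomm : ∀ i j, 1 ≤ i → i + 2 ≤ j → Commute (e i) (e j)) (n : ℕ) :
    fWord e (n + 1) =
      descWord e 1 (n + 2) * ascWord e (n + 3) (n + 1) * fWord (fun i => e (i + 1)) n := by
  suffices h : ∀ m, rowWord e (n + 1) (m + 1) =
      descWord e 1 (n + 2) * ascWord e (n + 3) m * rowWord (fun i => e (i + 1)) n m from h _
  intro m
  induction m with
  | zero => simp [rowWord, ascWord]
  | succ m ih =>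
    have hc : Commute (e (n + 3 + m)) (rowWord (fun i => e (i + 1)) n m) :=
      commute_rowWord fun i h₁ _ => (hcomm (i + 1) _ (by omega) (by omega)).symm
    rw [rowWord, ih, rowWord, descWord_shift, ascWord, descWord.eq_2 e (m + 1 + 1),
      show m + 1 + 1 + (n + 1) = n + 3 + m by omega]
    simp only [← mul_assoc]
    rw [mul_assoc _ _ (e (n + 3 + m)), ← hc.eq, ← mul_assoc]

theorem fWord_succ_eq_midWord
    (hcomm : ∀ i j, 1 ≤ i → i + 2 ≤ j → Commute (e i) (e j)) (n : ℕ) :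
    fWord e (n + 1) = ascWord e (n + 2) n * midWord e n * descWord e (n + 2) n := by
  rw [fWord_succ hcomm, ascWord, descWord, descWord, midWord,
    show n + 2 + n = 2 * n + 2 by omega, show n + 2 + (n + 1) = 2 * n + 3 by omega]
  simp only [mul_assoc]

end Words

section Braid

variable {k A : Type*} [CommSemiring k] [Semiring A] [Algebra k A] {e : ℕ → A} {lam : k}

theorem descWord_mul_e
    (hbraid : ∀ i, 1 ≤ i → e (i + 1) * e i * e (i + 1) = lam • e (i + 1))
    {a : ℕ} (ha : 1 ≤ a) (ℓ : ℕ) :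
    descWord e a (ℓ + 2) * e (a + 1) = lam • descWord e (a + 1) (ℓ + 1) := by
  rw [descWord_succ', descWord_succ', mul_assoc, mul_assoc, ← mul_assoc (e (a + 1)),
    hbraid a ha, mul_smul_comm, ← descWord_succ']

theorem descWord_mul_ascWord
    (hbraid : ∀ i, 1 ≤ i → e (i + 1) * e i * e (i + 1) = lam • e (i + 1))
    {a : ℕ} (ha : 1 ≤ a) (j ℓ : ℕ) :
    descWord e a (j + ℓ + 1) * ascWord e (a + 1) j =
      lam ^ j • descWord e (a + j) (ℓ + 1) := by
  induction j generalizing ℓ with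
  | zero => simp [ascWord]
  | succ j ih =>
    rw [ascWord, ← mul_assoc, show j + 1 + ℓ + 1 = j + (ℓ + 1) + 1 by omega, ih,
      smul_mul_assoc, show a + 1 + j = a + j + 1 by omega, descWord_mul_e hbraid (by omega),
      smul_smul, ← pow_succ, Nat.add_assoc a j 1]

theorem descWord_mul_ascWord_self
    (hbraid : ∀ i, 1 ≤ i → e (i + 1) * e i * e (i + 1) = lam • e (i + 1))
    {a : ℕ} (ha : 1 ≤ a) (hidem : e a * e a = e a) (m : ℕ) :
    descWord e a (m + 1) * ascWord e a (m + 1) = lam ^ m • e (a + m) := by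
  have hD : descWord e a (m + 1) * e a = descWord e a (m + 1) := by
    rw [descWord_succ', mul_assoc, hidem]
  rw [ascWord_succ', ← mul_assoc, hD]
  simpa [descWord_one] using descWord_mul_ascWord hbraid ha m 0

end Braid

section CompExp

variable {k V : Type*} [CommSemiring k] [AddCommMonoid V] [Module k V]

def compExp (Φ : ℕ → V →ₗ[k] V) (a ℓ : ℕ) : V →ₗ[k] V :=
  ((List.range ℓ).map fun i => Φ (a + i)).foldr (· ∘ₗ ·) LinearMap.id

variable (Φ : ℕ → V →ₗ[k] V)

theorem compExp_zero (a : ℕ) : compExp Φ a 0 = LinearMap.id := rfl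

theorem compExp_succ (a ℓ : ℕ) :
    compExp Φ a (ℓ + 1) = Φ a ∘ₗ compExp Φ (a + 1) ℓ := by
  simp only [compExp, List.range_succ_eq_map, List.map_cons, List.foldr_cons, List.map_map]
  congr 3
  funext i
  simp [Nat.add_right_comm, Nat.add_assoc]

theorem compExp_succ' (a ℓ : ℕ) :
    compExp Φ a (ℓ + 1) = compExp Φ a ℓ ∘ₗ Φ (a + ℓ) := by
  induction ℓ generalizing a with
  | zero => rfl
  | succ ℓ ih =>
    rw [compExp_succ, ih, compExp_succ, LinearMap.comp_assoc, Nat.add_right_comm a 1]; rfl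

theorem compExp_shift (a ℓ : ℕ) :
    compExp Φ (a + 1) ℓ = compExp (fun i => Φ (i + 1)) a ℓ := by
  simp only [compExp, Nat.add_right_comm a 1]

end CompExp

section Submodule

variable {k A : Type*} [CommSemiring k] [Semiring A] [Algebra k A]

theorem Submodule.span_singleton_mul_span_singleton (x y : A) :
    (k ∙ x) * (k ∙ y) = k ∙ (x * y) := by
  rw [Submodule.span_mul_span, Set.singleton_mul_singleton]

theorem Submodule.span_singleton_mul_comm {x : A} {S : Submodule k A}
    (h : ∀ y ∈ S, Commute x y) :
    (k ∙ x) * S = S * (k ∙ x) := by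
  ext z
  rw [Submodule.mem_span_singleton_mul, Submodule.mem_mul_span_singleton]
  exact exists_congr fun y => and_congr_right fun hy => by rw [(h y hy).eq]

theorem Subalgebra.span_sandwich (S : Subalgebra k A) (x : A) :
    Submodule.span k {z | ∃ a ∈ S, ∃ b ∈ S, z = a * x * b} =
      S.toSubmodule * (k ∙ x) * S.toSubmodule := by
  rw [← Submodule.span_eq S.toSubmodule, Submodule.span_mul_span, Submodule.span_mul_span]
  congr 1
  ext z
  simp [Set.mem_mul, eq_comm]

end Submodule

theorem Nat.add_one_mul_add_two_div_two (n : ℕ) :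
    (n + 1) * (n + 2) / 2 = n * (n + 1) / 2 + (n + 1) := by
  rw [show (n + 1) * (n + 2) = n * (n + 1) + 2 * (n + 1) by ring,
    Nat.add_mul_div_left _ _ two_pos]

theorem list_prod_map_range_eq_descWord {M : Type*} [Monoid M] (e : ℕ → M) (a ℓ : ℕ) :
    ((List.range ℓ).map fun i => e (a + ℓ - 1 - i)).prod = descWord e a ℓ := by
  induction ℓ with
  | zero => rfl
  | succ ℓ ih =>
    rw [List.range_succ_eq_map, List.map_cons, List.prod_cons, List.map_map, descWord, ← ih]
    rw [show a + (ℓ + 1) - 1 - 0 = a + ℓ by omega]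
    congr 2
    refine List.map_congr_left fun i _ => ?_
    simp only [Function.comp_apply]
    congr 1
    omega

theorem list_prod_map_range_eq_rowWord {M : Type*} [Monoid M] (e : ℕ → M) (n m : ℕ) :
    ((List.range m).map fun j =>
      ((List.range (n + 1)).map fun i => e (n + 1 + j - i)).prod).prod = rowWord e n m := by
  induction m with
  | zero => rfl
  | succ m ih =>
    rw [List.range_succ (n := m), List.map_append, List.prod_append, ih, List.map_singleton,
      List.prod_singleton, rowWord, ← list_prod_map_range_eq_descWord]
    congr 3
    funext i; congr 1; omega

theorem fIdem_eq_smul_fWord {k R : Type*} [Field k] [Ring R] [Algebra k R] (lam : k)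
    (e : ℕ → R) (n : ℕ) : fIdem lam e n = lam⁻¹ ^ (n * (n + 1) / 2) • fWord e n := by
  rw [fIdem, list_prod_map_range_eq_rowWord, fWord]

/-- A Jones tower `M 0 ⊆ M 1 ⊆ ⋯` inside an ambient algebra `R`: level `M (i + 1)` is the
algebra `M_i` of the paper and `M 0 = N`, and `E i : M (i + 1) → M i` is the conditional
expectation, so that `E 0 = E` and `E (i + 1) = E_{M_i}`. -/
structure JonesTower (k R : Type*) [Field k] [Ring R] [Algebra k R] where
  M : ℕ → Subalgebra k R
  e : ℕ → R
  E : ℕ → R →ₗ[k] R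
  lam : k
  lam_ne_zero : lam ≠ 0
  mono : Monotone M
  E_mem : ∀ i, ∀ x ∈ M (i + 1), E i x ∈ M i
  E_one : ∀ i, E i 1 = 1
  e_mem : ∀ i, e (i + 1) ∈ M (i + 2)
  e_mul_self : ∀ i, e (i + 1) * e (i + 1) = e (i + 1)
  toSubmodule_eq : ∀ i, (M (i + 2)).toSubmodule =
    (M (i + 1)).toSubmodule * (k ∙ e (i + 1)) * (M (i + 1)).toSubmodule
  E_mul_e_mul : ∀ i, ∀ x ∈ M (i + 1), ∀ y ∈ M (i + 1),
    E (i + 1) (x * e (i + 1) * y) = lam • (x * y)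
  e_mul_mul_e : ∀ i, ∀ x ∈ M (i + 1), e (i + 1) * x * e (i + 1) = E i x * e (i + 1)
  commute_e : ∀ i, ∀ x ∈ M i, Commute (e (i + 1)) x

namespace JonesTower

variable {k R : Type*} [Field k] [Ring R] [Algebra k R] (T : JonesTower k R)

def shift : JonesTower k R where
  M i := T.M (i + 1)
  e i := T.e (i + 1)
  E i := T.E (i + 1)
  lam := T.lam
  lam_ne_zero := T.lam_ne_zero
  mono _ _ h := T.mono (Nat.add_le_add_right h 1)
  E_mem i := T.E_mem (i + 1)
  E_one i := T.E_one (i + 1)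
  e_mem i := T.e_mem (i + 1)
  e_mul_self i := T.e_mul_self (i + 1)
  toSubmodule_eq i := T.toSubmodule_eq (i + 1)
  E_mul_e_mul i := T.E_mul_e_mul (i + 1)
  e_mul_mul_e i := T.e_mul_mul_e (i + 1)
  commute_e i := T.commute_e (i + 1)

theorem e_mem_of_le {j m : ℕ} (hj : 1 ≤ j) (h : j + 1 ≤ m) : T.e j ∈ T.M m := by
  obtain ⟨i, rfl⟩ : ∃ i, j = i + 1 := ⟨j - 1, by omega⟩
  exact T.mono h (T.e_mem i)

theorem commute_of_mem {x : R} {m j : ℕ} (hx : x ∈ T.M m) (h : m + 1 ≤ j) :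
    Commute (T.e j) x := by
  obtain ⟨i, rfl⟩ : ∃ i, j = i + 1 := ⟨j - 1, by omega⟩
  exact T.commute_e i x (T.mono (by omega) hx)

theorem commute_e_e {i j : ℕ} (hi : 1 ≤ i) (h : i + 2 ≤ j) : Commute (T.e i) (T.e j) :=
  (T.commute_of_mem (T.e_mem_of_le hi le_rfl) h).symm

theorem braid {i : ℕ} (hi : 1 ≤ i) :
    T.e (i + 1) * T.e i * T.e (i + 1) = T.lam • T.e (i + 1) := by
  obtain ⟨i, rfl⟩ : ∃ i', i = i' + 1 := ⟨i - 1, by omega⟩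
  have h := T.E_mul_e_mul i 1 (one_mem _) 1 (one_mem _)
  rw [one_mul, mul_one, mul_one] at h
  rw [T.e_mul_mul_e (i + 1) _ (T.e_mem i), h, smul_mul_assoc, one_mul]

theorem fWord_mem (n : ℕ) : fWord T.e n ∈ T.M (2 * n + 2) :=
  _root_.fWord_mem (S := (T.M _).toSubmonoid) fun _ h₁ _ => T.e_mem_of_le h₁ (by omega)

theorem commute_fWord {x : R} (hx : x ∈ T.M 0) (n : ℕ) : Commute x (fWord T.e n) :=
  _root_.commute_fWord fun _ h₁ _ => (T.commute_of_mem hx h₁).symm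

theorem descWord_mem {a ℓ m : ℕ} (ha : 1 ≤ a) (h : a + ℓ ≤ m) :
    descWord T.e a ℓ ∈ T.M m :=
  _root_.descWord_mem (S := (T.M m).toSubmonoid) fun _ h₁ _ =>
    T.e_mem_of_le (by omega) (by omega)

theorem ascWord_mem {a ℓ m : ℕ} (ha : 1 ≤ a) (h : a + ℓ ≤ m) :
    ascWord T.e a ℓ ∈ T.M m :=
  _root_.ascWord_mem (S := (T.M m).toSubmonoid) fun _ h₁ _ =>
    T.e_mem_of_le (by omega) (by omega)

theorem compExp_mem {a ℓ : ℕ} {x : R} (hx : x ∈ T.M (a + ℓ)) :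
    compExp T.E a ℓ x ∈ T.M a := by
  induction ℓ generalizing a with
  | zero => exact hx
  | succ ℓ ih =>
    rw [compExp_succ]
    exact T.E_mem a _ (ih (by rwa [Nat.add_right_comm]))

theorem compExp_one (a ℓ : ℕ) : compExp T.E a ℓ 1 = 1 := by
  induction ℓ generalizing a with
  | zero => rfl
  | succ ℓ ih => rw [compExp_succ, LinearMap.comp_apply, ih, T.E_one]

theorem fWord_succ (n : ℕ) : fWord T.e (n + 1) =
    ascWord T.e (n + 2) (n + 1) * fWord T.e n * descWord T.e (n + 2) (n + 2) :=
  _root_.fWord_succ (fun _ _ => T.commute_e_e) n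

theorem descWord_mul_mul_ascWord {n : ℕ} {x : R} (hx : x ∈ T.M (n + 2)) :
    descWord T.e (n + 2) (n + 2) * x * ascWord T.e (n + 2) (n + 1) =
      T.lam ^ n • (T.E (n + 1) x * (T.e (2 * n + 3) * T.e (2 * n + 2))) := by
  have hB : descWord T.e (n + 2) (n + 2) = descWord T.e (n + 3) (n + 1) * T.e (n + 2) :=
    descWord_succ' _ _
  have hA : ascWord T.e (n + 2) (n + 1) = T.e (n + 2) * ascWord T.e (n + 3) n :=
    ascWord_succ' _ _
  have hy : Commute (T.E (n + 1) x) (descWord T.e (n + 3) (n + 1)) :=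
    commute_descWord fun _ h₁ _ => (T.commute_of_mem (T.E_mem _ x hx) (by omega)).symm
  have hcollapse := descWord_mul_ascWord (fun _ => T.braid) (a := n + 2) (by omega) n 1
  rw [show n + 2 + n = 2 * n + 2 by omega] at hcollapse
  calc descWord T.e (n + 2) (n + 2) * x * ascWord T.e (n + 2) (n + 1)
      = descWord T.e (n + 3) (n + 1) * (T.e (n + 2) * x * T.e (n + 2)) *
          ascWord T.e (n + 3) n := by
        rw [hB, hA]; simp only [mul_assoc]
    _ = T.E (n + 1) x * (descWord T.e (n + 2) (n + 2) * ascWord T.e (n + 3) n) := by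
        rw [T.e_mul_mul_e _ x hx, ← mul_assoc, ← hy.eq, hB]; simp only [mul_assoc]
    _ = _ := by
        rw [hcollapse, mul_smul_comm]; simp [descWord]

theorem e_mul_e_mul_fWord_mul_descWord (n : ℕ) :
    T.e (2 * n + 3) * T.e (2 * n + 2) * (fWord T.e n * descWord T.e (n + 2) (n + 2)) =
      T.lam • (fWord T.e n * descWord T.e (n + 2) (n + 2)) := by
  have hP : Commute (T.e (2 * n + 3)) (fWord T.e n) :=
    _root_.commute_fWord fun i h₁ _ => (T.commute_e_e h₁ (by omega)).symm
  have hB : descWord T.e (n + 2) (n + 2) = T.e (2 * n + 3) * descWord T.e (n + 2) (n + 1) := by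
    rw [descWord, show n + 2 + (n + 1) = 2 * n + 3 by omega]
  have hPB : fWord T.e n * (T.e (2 * n + 3) * descWord T.e (n + 2) (n + 1)) =
      T.e (2 * n + 3) * (fWord T.e n * descWord T.e (n + 2) (n + 1)) := by
    rw [← mul_assoc, ← hP.eq, mul_assoc]
  have hbraid := T.braid (i := 2 * n + 2) (by omega)
  rw [show 2 * n + 2 + 1 = 2 * n + 3 by omega] at hbraid
  rw [hB, hPB, ← mul_assoc, hbraid, smul_mul_assoc]

theorem fWord_mul_mul_fWord (n : ℕ) {x : R} (hx : x ∈ T.M (n + 1)) :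
    fWord T.e n * x * fWord T.e n =
      T.lam ^ (n * (n + 1) / 2) • (compExp T.E 0 (n + 1) x * fWord T.e n) := by
  induction n generalizing x with
  | zero => simpa [fWord_zero, compExp_succ, compExp_zero] using T.e_mul_mul_e 0 x hx
  | succ n ih =>
    have hy : T.E (n + 1) x ∈ T.M (n + 1) := T.E_mem _ x hx
    have hF : compExp T.E 0 (n + 2) x = compExp T.E 0 (n + 1) (T.E (n + 1) x) := by
      rw [compExp_succ', LinearMap.comp_apply, Nat.zero_add]
    have hFy : Commute (compExp T.E 0 (n + 1) (T.E (n + 1) x)) (ascWord T.e (n + 2) (n + 1)) :=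
      commute_ascWord fun _ h₁ _ =>
        (T.commute_of_mem (T.compExp_mem (by simpa using hy)) (by omega)).symm
    calc fWord T.e (n + 1) * x * fWord T.e (n + 1)
        = ascWord T.e (n + 2) (n + 1) * fWord T.e n *
            (descWord T.e (n + 2) (n + 2) * x * ascWord T.e (n + 2) (n + 1)) *
            (fWord T.e n * descWord T.e (n + 2) (n + 2)) := by
          rw [T.fWord_succ]; simp only [mul_assoc]
      _ = T.lam ^ n • (ascWord T.e (n + 2) (n + 1) * fWord T.e n * T.E (n + 1) x *
            (T.e (2 * n + 3) * T.e (2 * n + 2) *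
              (fWord T.e n * descWord T.e (n + 2) (n + 2)))) := by
          rw [T.descWord_mul_mul_ascWord hx]
          simp only [mul_smul_comm, smul_mul_assoc, mul_assoc]
      _ = T.lam ^ (n + 1) • (ascWord T.e (n + 2) (n + 1) *
            (fWord T.e n * T.E (n + 1) x * fWord T.e n) * descWord T.e (n + 2) (n + 2)) := by
          rw [T.e_mul_e_mul_fWord_mul_descWord, mul_smul_comm, smul_smul, pow_succ]
          simp only [mul_assoc]
      _ = T.lam ^ ((n + 1) * (n + 2) / 2) •
            (compExp T.E 0 (n + 2) x * fWord T.e (n + 1)) := by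
          have hmove : ascWord T.e (n + 2) (n + 1) *
              (compExp T.E 0 (n + 1) (T.E (n + 1) x) * fWord T.e n) *
                descWord T.e (n + 2) (n + 2) =
              compExp T.E 0 (n + 1) (T.E (n + 1) x) * fWord T.e (n + 1) := by
            rw [← mul_assoc, ← hFy.eq, T.fWord_succ]; simp only [mul_assoc]
          rw [ih hy, mul_smul_comm, smul_mul_assoc, hmove, smul_smul, ← pow_add, hF,
            Nat.add_one_mul_add_two_div_two, Nat.add_comm (n + 1)]

theorem E_mul_e_mul_mul_e_mul {j : ℕ} {x y z : R} (hx : x ∈ T.M (j + 1))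
    (hy : y ∈ T.M (j + 1)) (hz : z ∈ T.M (j + 1)) :
    T.E (j + 1) (x * (T.e (j + 1) * z * T.e (j + 1)) * y) = T.lam • (x * T.E j z * y) := by
  rw [T.e_mul_mul_e j z hz, ← mul_assoc,
    T.E_mul_e_mul j _ (mul_mem hx (T.mono j.le_succ (T.E_mem j z hz))) y hy]

theorem compExp_fWord_succ_eq (n : ℕ) :
    ∀ u t, t + u = n + 1 → compExp T.E (n + 2 + t) (u + 1) (fWord T.e (n + 1)) =
      T.lam ^ (u + 1) • (ascWord T.e (n + 2) t * compExp T.E (n + 1 + t) u (fWord T.e n) *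
        descWord T.e (n + 2) t) := by
  intro u
  induction u with
  | zero =>
    intro t ht
    obtain rfl : t = n + 1 := by omega
    have hB : descWord T.e (n + 2) (n + 2) = T.e (2 * n + 3) * descWord T.e (n + 2) (n + 1) := by
      rw [descWord, show n + 2 + (n + 1) = 2 * n + 3 by omega]
    have hU : ascWord T.e (n + 2) (n + 1) * fWord T.e n ∈ T.M (2 * n + 3) :=
      mul_mem (T.ascWord_mem (by omega) (by omega)) (T.mono (by omega) (T.fWord_mem n))
    have hD : descWord T.e (n + 2) (n + 1) ∈ T.M (2 * n + 3) :=
      T.descWord_mem (by omega) (by omega)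
    have h := T.E_mul_e_mul (2 * n + 2) _ hU _ hD
    rw [show 2 * n + 2 + 1 = 2 * n + 3 by omega] at h
    rw [compExp_succ, compExp_zero, compExp_zero, LinearMap.comp_id, T.fWord_succ, hB,
      ← mul_assoc, show n + 2 + (n + 1) = 2 * n + 3 by omega, h, pow_one, LinearMap.id_apply]
  | succ u ih =>
    intro t ht
    have hz : compExp T.E (n + 1 + t + 1) u (fWord T.e n) ∈ T.M (n + 1 + t + 1) :=
      T.compExp_mem (T.mono (by omega) (T.fWord_mem n))
    have hU : ascWord T.e (n + 2) t ∈ T.M (n + 1 + t + 1) := T.ascWord_mem (by omega) (by omega)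
    have hD : descWord T.e (n + 2) t ∈ T.M (n + 1 + t + 1) := T.descWord_mem (by omega) (by omega)
    have hpeel := T.E_mul_e_mul_mul_e_mul (j := n + 1 + t) hU hD hz
    rw [compExp_succ, LinearMap.comp_apply, show n + 2 + t + 1 = n + 2 + (t + 1) by omega,
      ih (t + 1) (by omega), map_smul, ascWord, descWord,
      show n + 2 + t = n + 1 + t + 1 by omega, show n + 1 + (t + 1) = n + 1 + t + 1 from rfl]
    simp only [mul_assoc] at hpeel ⊢
    rw [hpeel, smul_smul, ← pow_succ, compExp_succ, LinearMap.comp_apply]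

theorem compExp_fWord (n : ℕ) :
    compExp T.E (n + 1) (n + 1) (fWord T.e n) = T.lam ^ ((n + 1) * (n + 2) / 2) • 1 := by
  induction n with
  | zero =>
    simpa [compExp_succ, compExp_zero, fWord_zero] using
      T.E_mul_e_mul 0 1 (one_mem _) 1 (one_mem _)
  | succ n ih =>
    have h := T.compExp_fWord_succ_eq n (n + 1) 0 (by omega)
    simp only [ascWord, descWord, Nat.add_zero, one_mul, mul_one] at h
    rw [h, ih, smul_smul, ← pow_add, Nat.add_one_mul_add_two_div_two (n + 1), Nat.add_comm]

theorem toSubmodule_mono {i j : ℕ} (h : i ≤ j) : (T.M i).toSubmodule ≤ (T.M j).toSubmodule :=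
  Subalgebra.toSubmodule.monotone (T.mono h)

theorem toSubmodule_mul_le {i j : ℕ} (h : i ≤ j) :
    (T.M i).toSubmodule * (T.M j).toSubmodule ≤ (T.M j).toSubmodule :=
  (mul_le_mul_left (T.toSubmodule_mono h) _).trans
    (Subalgebra.isIdempotentElem_toSubmodule _).le

theorem mul_toSubmodule_le {i j : ℕ} (h : i ≤ j) :
    (T.M j).toSubmodule * (T.M i).toSubmodule ≤ (T.M j).toSubmodule :=
  (mul_le_mul_right (T.toSubmodule_mono h) _).trans
    (Subalgebra.isIdempotentElem_toSubmodule _).le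

theorem span_e_mul_toSubmodule_comm {i j : ℕ} (h : i + 1 ≤ j) :
    (k ∙ T.e j) * (T.M i).toSubmodule = (T.M i).toSubmodule * (k ∙ T.e j) :=
  Submodule.span_singleton_mul_comm fun _ hy => T.commute_of_mem hy h

theorem toSubmodule_mul_span_le {i j : ℕ} {x : R} (h : i ≤ j) (hx : x ∈ T.M j) :
    (T.M i).toSubmodule * (k ∙ x) ≤ (T.M j).toSubmodule :=
  (mul_le_mul_right ((Submodule.span_singleton_le_iff_mem _ _).2 hx) _).trans
    (T.toSubmodule_mul_le h)

theorem span_mul_toSubmodule_le {i j : ℕ} {x : R} (h : i ≤ j) (hx : x ∈ T.M j) :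
    (k ∙ x) * (T.M i).toSubmodule ≤ (T.M j).toSubmodule :=
  (mul_le_mul_left ((Submodule.span_singleton_le_iff_mem _ _).2 hx) _).trans
    (T.mul_toSubmodule_le h)

theorem le_toSubmodule_mul (i : ℕ) (p : Submodule k R) : p ≤ (T.M i).toSubmodule * p :=
  calc p = 1 * p := (one_mul p).symm
    _ ≤ (T.M i).toSubmodule * p := mul_le_mul_left (Submodule.one_le.2 (T.M i).one_mem) _

theorem le_mul_toSubmodule (i : ℕ) (p : Submodule k R) : p ≤ p * (T.M i).toSubmodule :=
  calc p = p * 1 := (mul_one p).symm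
    _ ≤ p * (T.M i).toSubmodule := mul_le_mul_right (Submodule.one_le.2 (T.M i).one_mem) _

theorem span_e_mul_toSubmodule_mul {i j : ℕ} (h : i + 1 ≤ j) (p : Submodule k R) :
    (k ∙ T.e j) * ((T.M i).toSubmodule * p) = (T.M i).toSubmodule * ((k ∙ T.e j) * p) := by
  rw [← mul_assoc, T.span_e_mul_toSubmodule_comm h, mul_assoc]

/-- `M_{2n+1} = M_n f_n M_n`, as `k`-submodules. -/
def IsSandwich (n : ℕ) : Prop :=
  (T.M (2 * n + 2)).toSubmodule =
    (T.M (n + 1)).toSubmodule * (k ∙ fWord T.e n) * (T.M (n + 1)).toSubmodule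

theorem span_fWord_mul_mul_span_fWord_le (n : ℕ) :
    (k ∙ fWord T.e n) * (T.M (n + 1)).toSubmodule * (k ∙ fWord T.e n) ≤
      (T.M 0).toSubmodule * (k ∙ fWord T.e n) := by
  refine Submodule.mul_le.2 fun p hp q hq => ?_
  obtain ⟨x, hx, rfl⟩ := Submodule.mem_span_singleton_mul.1 hp
  obtain ⟨c, rfl⟩ := Submodule.mem_span_singleton.1 hq
  rw [mul_smul_comm, T.fWord_mul_mul_fWord n hx, smul_smul]
  exact Submodule.smul_mem _ _ (Submodule.mul_mem_mul
    (T.compExp_mem (by simpa using hx)) (Submodule.mem_span_singleton_self _))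

theorem toSubmodule_mul_span_fWord_le {n : ℕ} (hn : T.IsSandwich n) :
    (T.M (2 * n + 2)).toSubmodule * (k ∙ fWord T.e n) ≤
      (T.M (n + 1)).toSubmodule * (k ∙ fWord T.e n) :=
  calc (T.M (2 * n + 2)).toSubmodule * (k ∙ fWord T.e n)
      = (T.M (n + 1)).toSubmodule *
          ((k ∙ fWord T.e n) * (T.M (n + 1)).toSubmodule * (k ∙ fWord T.e n)) := by
        rw [show _ = _ from hn]; simp only [mul_assoc]
    _ ≤ (T.M (n + 1)).toSubmodule * ((T.M 0).toSubmodule * (k ∙ fWord T.e n)) :=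
        mul_le_mul_right (T.span_fWord_mul_mul_span_fWord_le n) _
    _ ≤ (T.M (n + 1)).toSubmodule * (k ∙ fWord T.e n) := by
        rw [← mul_assoc]; gcongr; exact T.mul_toSubmodule_le (Nat.zero_le _)

theorem span_fWord_mul_toSubmodule_le {n : ℕ} (hn : T.IsSandwich n) :
    (k ∙ fWord T.e n) * (T.M (2 * n + 2)).toSubmodule ≤
      (k ∙ fWord T.e n) * (T.M (n + 1)).toSubmodule :=
  calc (k ∙ fWord T.e n) * (T.M (2 * n + 2)).toSubmodule
      = (k ∙ fWord T.e n) * (T.M (n + 1)).toSubmodule * (k ∙ fWord T.e n) *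
          (T.M (n + 1)).toSubmodule := by
        rw [show _ = _ from hn]; simp only [mul_assoc]
    _ ≤ (T.M 0).toSubmodule * (k ∙ fWord T.e n) * (T.M (n + 1)).toSubmodule :=
        mul_le_mul_left (T.span_fWord_mul_mul_span_fWord_le n) _
    _ ≤ (k ∙ fWord T.e n) * (T.M (n + 1)).toSubmodule := by
        rw [← Submodule.span_singleton_mul_comm fun y hy => (T.commute_fWord hy n).symm,
          mul_assoc]
        gcongr; exact T.toSubmodule_mul_le (Nat.zero_le _)

theorem toSubmodule_mul_span_fWord_succ_le {n : ℕ} (hn : T.shift.IsSandwich n) :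
    (T.M (2 * n + 3)).toSubmodule * (k ∙ fWord T.e (n + 1)) ≤
      (T.M (n + 2)).toSubmodule * (k ∙ fWord T.e (n + 1)) := by
  rw [fWord_succ_eq_shift_mul (fun _ _ => T.commute_e_e),
    ← Submodule.span_singleton_mul_span_singleton,
    ← mul_assoc, ← mul_assoc]
  exact mul_le_mul_left (T.shift.toSubmodule_mul_span_fWord_le hn) _

theorem span_fWord_succ_mul_toSubmodule_le {n : ℕ} (hn : T.shift.IsSandwich n) :
    (k ∙ fWord T.e (n + 1)) * (T.M (2 * n + 3)).toSubmodule ≤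
      (k ∙ fWord T.e (n + 1)) * (T.M (n + 2)).toSubmodule := by
  rw [fWord_succ_eq_mul_shift (fun _ _ => T.commute_e_e),
    ← Submodule.span_singleton_mul_span_singleton,
    mul_assoc, mul_assoc]
  exact mul_le_mul_right (T.shift.span_fWord_mul_toSubmodule_le hn) _

theorem span_midWord (n : ℕ) : (k ∙ midWord T.e n) =
    (k ∙ T.e (2 * n + 2)) * (k ∙ fWord T.e n) *
      (k ∙ (T.e (2 * n + 3) * T.e (2 * n + 2))) := by
  rw [midWord, Submodule.span_singleton_mul_span_singleton,
    Submodule.span_singleton_mul_span_singleton]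

theorem span_e_eq_span_descWord_mul_span_ascWord {n : ℕ} (hn : 1 ≤ n) :
    (k ∙ T.e (2 * n + 1)) =
      (k ∙ descWord T.e (n + 2) n) * (k ∙ ascWord T.e (n + 2) n) := by
  obtain ⟨m, rfl⟩ : ∃ m, n = m + 1 := ⟨n - 1, by omega⟩
  rw [Submodule.span_singleton_mul_span_singleton,
    descWord_mul_ascWord_self (fun _ => T.braid) (by omega) (T.e_mul_self _),
    Submodule.span_singleton_smul_eq (T.lam_ne_zero.isUnit.pow m),
    show m + 1 + 2 + m = 2 * (m + 1) + 1 by omega]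

theorem toSubmodule_mul_span_midWord_le {n : ℕ} (hn : T.IsSandwich n) :
    (T.M (2 * n + 1)).toSubmodule * (k ∙ midWord T.e n) ≤
      (T.M (n + 1)).toSubmodule * (k ∙ midWord T.e n) :=
  calc (T.M (2 * n + 1)).toSubmodule * (k ∙ midWord T.e n)
      = (k ∙ T.e (2 * n + 2)) * ((T.M (2 * n + 1)).toSubmodule * (k ∙ fWord T.e n)) *
          (k ∙ (T.e (2 * n + 3) * T.e (2 * n + 2))) := by
        rw [span_midWord, ← mul_assoc, ← mul_assoc,
          ← T.span_e_mul_toSubmodule_comm (by omega)]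
        simp only [mul_assoc]
    _ ≤ (k ∙ T.e (2 * n + 2)) * ((T.M (n + 1)).toSubmodule * (k ∙ fWord T.e n)) *
          (k ∙ (T.e (2 * n + 3) * T.e (2 * n + 2))) :=
        mul_le_mul_left (mul_le_mul_right ((mul_le_mul_left
          (T.toSubmodule_mono (Nat.le_succ _)) _).trans (T.toSubmodule_mul_span_fWord_le hn)) _) _
    _ = (T.M (n + 1)).toSubmodule * (k ∙ midWord T.e n) := by
        rw [span_midWord, ← mul_assoc, T.span_e_mul_toSubmodule_comm (by omega)]
        simp only [mul_assoc]

theorem span_midWord_le_left {n : ℕ} (hn1 : 1 ≤ n) (hn : T.IsSandwich n) :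
    (k ∙ midWord T.e n) ≤
      (T.M (2 * n + 2)).toSubmodule * (k ∙ ascWord T.e (n + 2) n) * (k ∙ midWord T.e n) :=
  calc (k ∙ midWord T.e n)
      ≤ (T.M (2 * n + 2)).toSubmodule * (k ∙ midWord T.e n) := T.le_toSubmodule_mul _ _
    _ = (T.M (2 * n + 1)).toSubmodule * (k ∙ T.e (2 * n + 1)) *
          ((T.M (2 * n + 1)).toSubmodule * (k ∙ midWord T.e n)) := by
        rw [T.toSubmodule_eq (2 * n)]; simp only [mul_assoc]
    _ ≤ (T.M (2 * n + 1)).toSubmodule * (k ∙ T.e (2 * n + 1)) *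
          ((T.M (n + 1)).toSubmodule * (k ∙ midWord T.e n)) :=
        mul_le_mul_right (T.toSubmodule_mul_span_midWord_le hn) _
    _ = (T.M (2 * n + 1)).toSubmodule * (T.M (n + 1)).toSubmodule *
          (k ∙ descWord T.e (n + 2) n) * (k ∙ ascWord T.e (n + 2) n) *
          (k ∙ midWord T.e n) := by
        rw [mul_assoc, ← mul_assoc (k ∙ T.e _), T.span_e_mul_toSubmodule_comm (by omega),
          T.span_e_eq_span_descWord_mul_span_ascWord hn1]
        simp only [mul_assoc]
    _ ≤ _ := by
        gcongr
        exact (mul_le_mul_left (T.mul_toSubmodule_le (by omega)) _).trans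
          (T.toSubmodule_mul_span_le (by omega) (T.descWord_mem (by omega) (by omega)))

theorem span_midWord_mul_toSubmodule_le {n : ℕ} (hn : T.IsSandwich n) :
    (k ∙ midWord T.e n) * (T.M (2 * n + 1)).toSubmodule ≤
      (k ∙ midWord T.e n) * (T.M (n + 1)).toSubmodule := by
  have hcomm : ∀ i ≤ 2 * n + 1,
      (k ∙ (T.e (2 * n + 3) * T.e (2 * n + 2))) * (T.M i).toSubmodule =
        (T.M i).toSubmodule * (k ∙ (T.e (2 * n + 3) * T.e (2 * n + 2))) := fun i hi =>
    Submodule.span_singleton_mul_comm fun _ hy =>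
      (T.commute_of_mem hy (by omega)).mul_left (T.commute_of_mem hy (by omega))
  calc (k ∙ midWord T.e n) * (T.M (2 * n + 1)).toSubmodule
      = (k ∙ T.e (2 * n + 2)) * ((k ∙ fWord T.e n) * (T.M (2 * n + 1)).toSubmodule) *
          (k ∙ (T.e (2 * n + 3) * T.e (2 * n + 2))) := by
        rw [span_midWord, mul_assoc, hcomm _ le_rfl]
        simp only [mul_assoc]
    _ ≤ (k ∙ T.e (2 * n + 2)) * ((k ∙ fWord T.e n) * (T.M (n + 1)).toSubmodule) *
          (k ∙ (T.e (2 * n + 3) * T.e (2 * n + 2))) :=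
        mul_le_mul_left (mul_le_mul_right ((mul_le_mul_right (T.toSubmodule_mono
          (Nat.le_succ _)) _).trans (T.span_fWord_mul_toSubmodule_le hn)) _) _
    _ = (k ∙ midWord T.e n) * (T.M (n + 1)).toSubmodule := by
        rw [span_midWord]
        simp only [mul_assoc]
        rw [hcomm _ (by omega)]

theorem span_midWord_le_right {n : ℕ} (hn1 : 1 ≤ n) (hn : T.IsSandwich n) :
    (k ∙ midWord T.e n) ≤
      (k ∙ midWord T.e n) * (k ∙ descWord T.e (n + 2) n) * (T.M (2 * n + 2)).toSubmodule :=
  calc (k ∙ midWord T.e n)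
      ≤ (k ∙ midWord T.e n) * (T.M (2 * n + 2)).toSubmodule := T.le_mul_toSubmodule _ _
    _ = (k ∙ midWord T.e n) * (T.M (2 * n + 1)).toSubmodule * (k ∙ T.e (2 * n + 1)) *
          (T.M (2 * n + 1)).toSubmodule := by
        rw [T.toSubmodule_eq (2 * n)]; simp only [mul_assoc]
    _ ≤ (k ∙ midWord T.e n) * (T.M (n + 1)).toSubmodule * (k ∙ T.e (2 * n + 1)) *
          (T.M (2 * n + 1)).toSubmodule :=
        mul_le_mul_left (mul_le_mul_left (T.span_midWord_mul_toSubmodule_le hn) _) _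
    _ = (k ∙ midWord T.e n) * (k ∙ descWord T.e (n + 2) n) * ((k ∙ ascWord T.e (n + 2) n) *
          ((T.M (n + 1)).toSubmodule * (T.M (2 * n + 1)).toSubmodule)) := by
        rw [mul_assoc _ (T.M (n + 1)).toSubmodule, ← T.span_e_mul_toSubmodule_comm (by omega),
          T.span_e_eq_span_descWord_mul_span_ascWord hn1]
        simp only [mul_assoc]
    _ ≤ _ :=
        mul_le_mul_right ((mul_le_mul_right (T.toSubmodule_mul_le (by omega)) _).trans
          (T.span_mul_toSubmodule_le (by omega) (T.ascWord_mem (by omega) (by omega)))) _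

theorem span_midWord_le {n : ℕ} (hn : T.IsSandwich n) :
    (k ∙ midWord T.e n) ≤ (T.M (2 * n + 2)).toSubmodule * (k ∙ fWord T.e (n + 1)) *
      (T.M (2 * n + 2)).toSubmodule := by
  rcases Nat.eq_zero_or_pos n with rfl | hn1
  · rw [midWord_zero]
    exact (T.le_toSubmodule_mul _ _).trans (T.le_mul_toSubmodule _ _)
  calc (k ∙ midWord T.e n)
      ≤ (T.M (2 * n + 2)).toSubmodule * (k ∙ ascWord T.e (n + 2) n) * (k ∙ midWord T.e n) :=
        T.span_midWord_le_left hn1 hn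
    _ ≤ (T.M (2 * n + 2)).toSubmodule * (k ∙ ascWord T.e (n + 2) n) *
          ((k ∙ midWord T.e n) * (k ∙ descWord T.e (n + 2) n) *
            (T.M (2 * n + 2)).toSubmodule) :=
        mul_le_mul_right (T.span_midWord_le_right hn1 hn) _
    _ = _ := by
        rw [fWord_succ_eq_midWord (fun _ _ => T.commute_e_e),
          ← Submodule.span_singleton_mul_span_singleton,
          ← Submodule.span_singleton_mul_span_singleton]
        simp only [mul_assoc]

theorem toSubmodule_le_sandwich_midWord {n : ℕ} (hn : T.IsSandwich n) :
    (T.M (2 * n + 4)).toSubmodule ≤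
      (T.M (2 * n + 2)).toSubmodule * (k ∙ midWord T.e n) * (T.M (2 * n + 2)).toSubmodule := by
  have h4 : (T.M (2 * n + 4)).toSubmodule = (T.M (2 * n + 3)).toSubmodule *
      (k ∙ T.e (2 * n + 3)) * (T.M (2 * n + 3)).toSubmodule := T.toSubmodule_eq (2 * n + 2)
  have h3 : (T.M (2 * n + 3)).toSubmodule = (T.M (2 * n + 2)).toSubmodule *
      (k ∙ T.e (2 * n + 2)) * (T.M (2 * n + 2)).toSubmodule := T.toSubmodule_eq (2 * n + 1)
  have hP : (k ∙ T.e (2 * n + 3)) * ((k ∙ fWord T.e n) * (k ∙ T.e (2 * n + 2))) =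
      (k ∙ fWord T.e n) * (k ∙ (T.e (2 * n + 3) * T.e (2 * n + 2))) := by
    rw [← mul_assoc, Submodule.span_singleton_mul_span_singleton,
      (_root_.commute_fWord fun i h₁ _ => (T.commute_e_e h₁ (by omega)).symm).eq,
      ← Submodule.span_singleton_mul_span_singleton, mul_assoc,
      Submodule.span_singleton_mul_span_singleton]
  have hcore : (k ∙ T.e (2 * n + 2)) * ((k ∙ T.e (2 * n + 3)) *
      ((T.M (2 * n + 2)).toSubmodule * (k ∙ T.e (2 * n + 2)))) =
      (T.M (n + 1)).toSubmodule * ((k ∙ midWord T.e n) * (T.M (n + 1)).toSubmodule) := by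
    rw [show _ = _ from hn, span_midWord]
    simp only [mul_assoc]
    rw [T.span_e_mul_toSubmodule_mul (by omega), T.span_e_mul_toSubmodule_mul (by omega),
      ← T.span_e_mul_toSubmodule_comm (i := n + 1) (j := 2 * n + 2) (by omega),
      ← mul_assoc (k ∙ fWord T.e n), ← mul_assoc (k ∙ T.e (2 * n + 3)), hP, mul_assoc]
  calc (T.M (2 * n + 4)).toSubmodule
      = (T.M (2 * n + 2)).toSubmodule * ((k ∙ T.e (2 * n + 2)) * ((k ∙ T.e (2 * n + 3)) *
          ((T.M (2 * n + 2)).toSubmodule * (k ∙ T.e (2 * n + 2))))) *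
          (T.M (2 * n + 2)).toSubmodule := by
        rw [h4, h3]
        simp only [mul_assoc]
        rw [← T.span_e_mul_toSubmodule_mul (i := 2 * n + 2) (j := 2 * n + 3) (by omega),
          ← mul_assoc (T.M (2 * n + 2)).toSubmodule (T.M (2 * n + 2)).toSubmodule,
          (Subalgebra.isIdempotentElem_toSubmodule _).eq]
    _ = (T.M (2 * n + 2)).toSubmodule * (T.M (n + 1)).toSubmodule * (k ∙ midWord T.e n) *
          ((T.M (n + 1)).toSubmodule * (T.M (2 * n + 2)).toSubmodule) := by
        rw [hcore]; simp only [mul_assoc]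
    _ ≤ _ := by
        gcongr
        · exact T.mul_toSubmodule_le (show n + 1 ≤ 2 * n + 2 by omega)
        · exact T.toSubmodule_mul_le (show n + 1 ≤ 2 * n + 2 by omega)

theorem isSandwich_zero : T.IsSandwich 0 := by
  simpa [IsSandwich, fWord_zero] using T.toSubmodule_eq 0

theorem isSandwich_succ {n : ℕ} (hn : T.IsSandwich n) (hs : T.shift.IsSandwich n) :
    T.IsSandwich (n + 1) := by
  rw [IsSandwich, show 2 * (n + 1) + 2 = 2 * n + 4 by ring, show n + 1 + 1 = n + 2 from rfl]
  refine le_antisymm ?_ ?_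
  · calc (T.M (2 * n + 4)).toSubmodule
        ≤ (T.M (2 * n + 2)).toSubmodule * (k ∙ midWord T.e n) * (T.M (2 * n + 2)).toSubmodule :=
          T.toSubmodule_le_sandwich_midWord hn
      _ ≤ (T.M (2 * n + 2)).toSubmodule * ((T.M (2 * n + 2)).toSubmodule *
            (k ∙ fWord T.e (n + 1)) * (T.M (2 * n + 2)).toSubmodule) *
            (T.M (2 * n + 2)).toSubmodule := by
          gcongr; exact T.span_midWord_le hn
      _ = (T.M (2 * n + 2)).toSubmodule * (k ∙ fWord T.e (n + 1)) *
            (T.M (2 * n + 2)).toSubmodule := by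
          simp only [← mul_assoc, (Subalgebra.isIdempotentElem_toSubmodule _).eq]
          simp only [mul_assoc, (Subalgebra.isIdempotentElem_toSubmodule _).eq]
      _ ≤ (T.M (2 * n + 3)).toSubmodule * (k ∙ fWord T.e (n + 1)) *
            (T.M (2 * n + 3)).toSubmodule := by
          gcongr <;> exact T.toSubmodule_mono (by omega)
      _ ≤ (T.M (n + 2)).toSubmodule * ((k ∙ fWord T.e (n + 1)) *
            (T.M (2 * n + 3)).toSubmodule) := by
          rw [← mul_assoc]; exact mul_le_mul_left (T.toSubmodule_mul_span_fWord_succ_le hs) _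
      _ ≤ _ := by
          rw [mul_assoc (T.M (n + 2)).toSubmodule]
          exact mul_le_mul_right (T.span_fWord_succ_mul_toSubmodule_le hs) _
  · have hP : fWord T.e (n + 1) ∈ T.M (2 * n + 4) := T.fWord_mem (n + 1)
    refine (mul_le_mul_left (T.toSubmodule_mul_span_le ?_ hP) _).trans
      (T.mul_toSubmodule_le ?_) <;> omega

theorem isSandwich (n : ℕ) : T.IsSandwich n := by
  induction n generalizing T with
  | zero => exact T.isSandwich_zero
  | succ n ih => exact T.isSandwich_succ (ih T) (ih T.shift)

theorem fIdem_mul_mul_fIdem (n : ℕ) {x : R} (hx : x ∈ T.M (n + 1)) :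
    fIdem T.lam T.e n * x * fIdem T.lam T.e n = compExp T.E 0 (n + 1) x * fIdem T.lam T.e n := by
  simp only [fIdem_eq_smul_fWord, smul_mul_assoc, mul_smul_comm, smul_smul]
  rw [T.fWord_mul_mul_fWord n hx, smul_smul, mul_assoc, ← mul_pow,
    inv_mul_cancel₀ T.lam_ne_zero, one_pow, mul_one]

theorem fIdem_mul_self (n : ℕ) : fIdem T.lam T.e n * fIdem T.lam T.e n = fIdem T.lam T.e n := by
  simpa [T.compExp_one] using T.fIdem_mul_mul_fIdem n (one_mem _)

theorem commute_fIdem {x : R} (hx : x ∈ T.M 0) (n : ℕ) : Commute x (fIdem T.lam T.e n) := by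
  rw [fIdem_eq_smul_fWord]
  exact (T.commute_fWord hx n).smul_right _

theorem toSubmodule_eq_span_fIdem (n : ℕ) : (T.M (2 * n + 2)).toSubmodule =
    Submodule.span k
      {z | ∃ a ∈ T.M (n + 1), ∃ b ∈ T.M (n + 1), z = a * fIdem T.lam T.e n * b} := by
  rw [Subalgebra.span_sandwich, fIdem_eq_smul_fWord,
    Submodule.span_singleton_smul_eq ((inv_ne_zero T.lam_ne_zero).isUnit.pow _)]
  exact T.isSandwich n

theorem compExp_fIdem (n : ℕ) :
    compExp T.E (n + 1) (n + 1) (fIdem T.lam T.e n) = T.lam ^ (n + 1) • 1 := by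
  rw [fIdem_eq_smul_fWord, map_smul, T.compExp_fWord, smul_smul, Nat.add_one_mul_add_two_div_two,
    pow_add, ← mul_assoc, ← mul_pow, inv_mul_cancel₀ T.lam_ne_zero, one_pow, one_mul]

end JonesTower

theorem compExp_eq_Fcomp {k R : Type*} [Field k] [Ring R] [Algebra k R] (E : R →ₗ[k] R)
    (Ec : ℕ → R →ₗ[k] R) (n : ℕ) :
    compExp (fun | 0 => E | i + 1 => Ec i) 0 (n + 1) = Fcomp E Ec n := by
  induction n with
  | zero => rfl
  | succ n ih => rw [compExp_succ', ih, Nat.zero_add]; rfl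

theorem compExp_eq_Gcomp {k R : Type*} [Field k] [Ring R] [Algebra k R] (E : R →ₗ[k] R)
    (Ec : ℕ → R →ₗ[k] R) (n : ℕ) :
    compExp (fun | 0 => E | i + 1 => Ec i) (n + 1) (n + 1) = Gcomp Ec n :=
  compExp_shift _ n (n + 1)

theorem stmt19_general {k : Type*} [Field k] {R : Type*} [Ring R] [Algebra k R]
    (N : Subalgebra k R) (Ms : ℕ → Subalgebra k R) (e : ℕ → R)
    (E : R →ₗ[k] R) (Ec : ℕ → R →ₗ[k] R) (lam : k) (hlam : lam ≠ 0)
    (hNM : N ≤ Ms 0) (hmono : Monotone Ms)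
    (hE_mem : ∀ x ∈ Ms 0, E x ∈ N) (hE_one : E 1 = 1)
    -- the Jones tower: M_{i+1} = M_i e_{i+1} M_i with conditional expectations
    (he_mem : ∀ i, e (i + 1) ∈ Ms (i + 1))
    (he_idem : ∀ i, e (i + 1) * e (i + 1) = e (i + 1))
    (hgen : ∀ i, (Ms (i + 1)).toSubmodule
      = Submodule.span k {z : R | ∃ a ∈ Ms i, ∃ b ∈ Ms i, z = a * e (i + 1) * b})
    (hEc_mem : ∀ i, ∀ x ∈ Ms (i + 1), Ec i x ∈ Ms i)
    (hEc_one : ∀ i, Ec i 1 = 1)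
    (hEc_e : ∀ i, ∀ x ∈ Ms i, ∀ y ∈ Ms i, Ec i (x * e (i + 1) * y) = lam • (x * y))
    -- e_{i+1} x e_{i+1} = E_{M_{i-1}}(x) e_{i+1} for x ∈ M_i
    (hjones0 : ∀ x ∈ Ms 0, e 1 * x * e 1 = E x * e 1)
    (hjones : ∀ i, ∀ x ∈ Ms (i + 1), e (i + 2) * x * e (i + 2) = Ec i x * e (i + 2))
    -- the Jones idempotents commute with the lower algebras
    (he1_N : ∀ y ∈ N, e 1 * y = y * e 1)
    (hcommM : ∀ i, ∀ x ∈ Ms i, e (i + 2) * x = x * e (i + 2)) :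
    ∀ n : ℕ,
      fIdem lam e n * fIdem lam e n = fIdem lam e n ∧
      (Ms (2 * n + 1)).toSubmodule
        = Submodule.span k {z : R | ∃ a ∈ Ms n, ∃ b ∈ Ms n,
            z = a * fIdem lam e n * b} ∧
      (∀ x ∈ Ms n,
        fIdem lam e n * x * fIdem lam e n = fIdem lam e n * Fcomp E Ec n x ∧
        fIdem lam e n * Fcomp E Ec n x = Fcomp E Ec n x * fIdem lam e n) ∧
      Gcomp Ec n (fIdem lam e n) = lam ^ (n + 1) • (1 : R) := by
  intro n
  let T : JonesTower k R :=
    { M := fun | 0 => N | i + 1 => Ms i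
      e := e
      E := fun | 0 => E | i + 1 => Ec i
      lam := lam
      lam_ne_zero := hlam
      mono := monotone_nat_of_le_succ fun | 0 => hNM | i + 1 => hmono i.le_succ
      E_mem := fun | 0 => hE_mem | i + 1 => hEc_mem i
      E_one := fun | 0 => hE_one | i + 1 => hEc_one i
      e_mem := he_mem
      e_mul_self := he_idem
      toSubmodule_eq := fun i => (hgen i).trans (Subalgebra.span_sandwich _ _)
      E_mul_e_mul := hEc_e
      e_mul_mul_e := fun | 0 => hjones0 | i + 1 => hjones i
      commute_e := fun | 0 => he1_N | i + 1 => hcommM i }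
  rw [← compExp_eq_Fcomp E Ec n, ← compExp_eq_Gcomp E Ec n]
  refine ⟨T.fIdem_mul_self n, T.toSubmodule_eq_span_fIdem n, fun x hx => ?_, T.compExp_fIdem n⟩
  have hFx := T.commute_fIdem (T.compExp_mem (a := 0) (ℓ := n + 1) (by simpa using hx)) n
  exact ⟨(T.fIdem_mul_mul_fIdem n hx).trans hFx.eq, hFx.eq.symm⟩

/-- composite basic construction: for a strongly separable extension
`N ⊆ M₀` of index `λ⁻¹` with Jones tower `N ⊆ M₀ ⊆ M₁ ⊆ ⋯` (inside an ambient
algebra `R`), for each `n ≥ 0` the element `f_n` is an idempotent satisfying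
`M_{2n+1} = M_n f_n M_n`, `f_n x f_n = f_n F_n(x) = F_n(x) f_n` for all `x ∈ M_n`,
and `F_{M_n}(f_n) = λ^{n+1} 1`; hence `M_{2n+1}`, with idempotent `f_n` and
conditional expectation `F_{M_n}`, realizes the basic construction of the composite
conditional expectation `F_n : M_n → N`. -/
theorem stmt19 {k : Type*} [Field k] {R : Type*} [Ring R] [Algebra k R]
    (N : Subalgebra k R) (Ms : ℕ → Subalgebra k R) (e : ℕ → R)
    (E : R →ₗ[k] R) (Ec : ℕ → R →ₗ[k] R) (lam : k) (hlam : lam ≠ 0)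
    (hNM : N ≤ Ms 0) (hmono : Monotone Ms)
    -- strongly separable extension data for E : M₀ → N
    (nE : ℕ) (xb yb : Fin nE → R)
    (hxb : ∀ i, xb i ∈ Ms 0) (hyb : ∀ i, yb i ∈ Ms 0)
    (hE_mem : ∀ x ∈ Ms 0, E x ∈ N) (hE_one : E 1 = 1)
    (hE_left : ∀ y ∈ N, ∀ x ∈ Ms 0, E (y * x) = y * E x)
    (hE_right : ∀ y ∈ N, ∀ x ∈ Ms 0, E (x * y) = E x * y)
    (hdual1 : ∀ m ∈ Ms 0, ∑ i, E (m * xb i) * yb i = m)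
    (hdual2 : ∀ m ∈ Ms 0, ∑ i, xb i * E (yb i * m) = m)
    (hindex : ∑ i, xb i * yb i = lam⁻¹ • (1 : R))
    -- the Jones tower: M_{i+1} = M_i e_{i+1} M_i with conditional expectations
    (he_mem : ∀ i, e (i + 1) ∈ Ms (i + 1))
    (he_idem : ∀ i, e (i + 1) * e (i + 1) = e (i + 1))
    (hgen : ∀ i, (Ms (i + 1)).toSubmodule
      = Submodule.span k {z : R | ∃ a ∈ Ms i, ∃ b ∈ Ms i, z = a * e (i + 1) * b})
    (hEc_mem : ∀ i, ∀ x ∈ Ms (i + 1), Ec i x ∈ Ms i)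
    (hEc_one : ∀ i, Ec i 1 = 1)
    (hEc_left : ∀ i, ∀ m ∈ Ms i, ∀ x ∈ Ms (i + 1), Ec i (m * x) = m * Ec i x)
    (hEc_right : ∀ i, ∀ m ∈ Ms i, ∀ x ∈ Ms (i + 1), Ec i (x * m) = Ec i x * m)
    (hEc_e : ∀ i, ∀ x ∈ Ms i, ∀ y ∈ Ms i, Ec i (x * e (i + 1) * y) = lam • (x * y))
    -- e_{i+1} x e_{i+1} = E_{M_{i-1}}(x) e_{i+1} for x ∈ M_i
    (hjones0 : ∀ x ∈ Ms 0, e 1 * x * e 1 = E x * e 1)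
    (hjones : ∀ i, ∀ x ∈ Ms (i + 1), e (i + 2) * x * e (i + 2) = Ec i x * e (i + 2))
    -- the braid-like relations
    (hbraid1 : ∀ i, 1 ≤ i → e i * e (i + 1) * e i = lam • e i)
    (hbraid2 : ∀ i, 1 ≤ i → e (i + 1) * e i * e (i + 1) = lam • e (i + 1))
    (hcomm : ∀ i j, 1 ≤ i → i + 2 ≤ j → e i * e j = e j * e i)
    -- the Jones idempotents commute with the lower algebras
    (he1_N : ∀ y ∈ N, e 1 * y = y * e 1)
    (hcommM : ∀ i, ∀ x ∈ Ms i, e (i + 2) * x = x * e (i + 2)) :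
    ∀ n : ℕ,
      fIdem lam e n * fIdem lam e n = fIdem lam e n ∧
      (Ms (2 * n + 1)).toSubmodule
        = Submodule.span k {z : R | ∃ a ∈ Ms n, ∃ b ∈ Ms n,
            z = a * fIdem lam e n * b} ∧
      (∀ x ∈ Ms n,
        fIdem lam e n * x * fIdem lam e n = fIdem lam e n * Fcomp E Ec n x ∧
        fIdem lam e n * Fcomp E Ec n x = Fcomp E Ec n x * fIdem lam e n) ∧
      Gcomp Ec n (fIdem lam e n) = lam ^ (n + 1) • (1 : R) :=
  stmt19_general N Ms e E Ec lam hlam hNM hmono hE_mem hE_one he_mem he_idem hgen hEc_mem hEc_one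
    hEc_e hjones0 hjones he1_N hcommM
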